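/- arXiv:2411.13233 — 3 statements merged into one kernel-verified Lean document; each statement's English description precedes it below -/
import Mathlib

section
/- Let x₀ and x₁ be points of E joined by a path u in E, and let ω₀ be a path in the fiber Y₀ = p⁻¹(p(x₀)) from x₀ to f(x₀) and ω₁ a path in the fiber Y₁ = p⁻¹(p(x₁)) from x₁ to f(x₁). Then the assignment which sends the class of [θ] ∈ π₁(Y₀, x₀) to the class of [H̃(1,·) ∗ ω₁⁻¹] ∈ π₁(Y₁, x₁), where H̃: I×I → E is any lift of the homotopy H(t,s) = p(u(t)) with H̃(t,0) = u(t), H̃(0,s) = (θ∗ω₀)(s) and H̃(t,1) = f(u(t)), is a well-defined bijection κ: R_B(f; x₀, ω₀) → R_B(f; x₁, ω₁). Moreover κ does not depend on the choice of the path u. -/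
open unitInterval

/-- The homotopy lifting property with respect to all spaces (Hurewicz fibration). -/
def IsHurewiczFibration {E B : Type} [TopologicalSpace E] [TopologicalSpace B]
    (p : C(E, B)) : Prop :=
  ∀ (X : Type) [TopologicalSpace X] (H : C(X × I, B)) (h₀ : C(X, E)),
    (∀ x, H (x, 0) = p (h₀ x)) →
      ∃ H' : C(X × I, E), (∀ x, H' (x, 0) = h₀ x) ∧ ∀ z, p (H' z) = H z

variable {E B : Type} [TopologicalSpace E] [TopologicalSpace B]

/-- Loops at `x₀` lying in the fiber of `p` through `x₀`; they represent elements of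
`π₁(Y, x₀)` where `Y = p⁻¹(p x₀)`. -/
def FiberLoop (p : C(E, B)) (x₀ : E) : Type :=
  {θ : Path x₀ x₀ // ∀ t, p (θ t) = p x₀}

/-- Two fiber loops `θ`, `θ'` are Reidemeister related over `B` (for the fiber map `g` and
base path `w` from `x₀` to `g x₀`) if there are a loop `c` in `E` at `x₀` and a lift `H` of
the homotopy `(t,s) ↦ p (c t)` with `H(t,0) = c(t)`, `H(0,s) = (θ∗w)(s)`, `H(t,1) = g(c(t))`
and `H(1,s) = (θ'∗w)(s)`. -/
def ReidemeisterRelB (p : C(E, B)) (g : C(E, E)) {x₀ : E} (w : Path x₀ (g x₀)) :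
    FiberLoop p x₀ → FiberLoop p x₀ → Prop := fun θ θ' =>
  ∃ (c : Path x₀ x₀) (H : C(I × I, E)),
    (∀ t, H (t, 0) = c t) ∧
    (∀ s, H (0, s) = (θ.1.trans w) s) ∧
    (∀ t, H (t, 1) = g (c t)) ∧
    (∀ s, H (1, s) = (θ'.1.trans w) s) ∧
    (∀ t s, p (H (t, s)) = p (c t))

/-- The set of Reidemeister classes over `B`. -/
def ReidemeisterSetB (p : C(E, B)) (g : C(E, E)) {x₀ : E} (w : Path x₀ (g x₀)) : Type :=
  Quot (ReidemeisterRelB p g w)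

/-- The `n`-th iterate of a continuous self-map, as a continuous map. -/
def iterC (f : C(E, E)) (n : ℕ) : C(E, E) := ⟨(⇑f)^[n], f.continuous.iterate n⟩

/-- The path `n(ω) = ω ∗ f(ω) ∗ ⋯ ∗ f^{n−1}(ω)` from `x₀` to `f^n(x₀)`. -/
noncomputable def nPath (f : C(E, E)) {x₀ : E} (ω : Path x₀ (f x₀)) : (n : ℕ) → Path x₀ ((⇑f)^[n] x₀)
  | 0 => Path.refl x₀
  | 1 => ω
  | (n + 2) => (nPath f ω (n + 1)).trans (ω.map (f.continuous.iterate (n + 1)))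

theorem fiber_iterate {p : C(E, B)} {f : C(E, E)} (hf : ∀ x, p (f x) = p x) :
    ∀ (k : ℕ) (x : E), p ((⇑f)^[k] x) = p x
  | 0, _ => rfl
  | (k + 1), x => by
      rw [Function.iterate_succ_apply, fiber_iterate hf k (f x), hf x]

theorem fiber_trans {p : C(E, B)} {x₀ a b c : E} {γ : Path a b} {δ : Path b c}
    (hγ : ∀ t, p (γ t) = p x₀) (hδ : ∀ t, p (δ t) = p x₀) :
    ∀ t, p ((γ.trans δ) t) = p x₀ := by
  intro t
  rw [Path.trans_apply]
  split_ifs <;> first | exact hγ _ | exact hδ _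

theorem fiber_symm {p : C(E, B)} {x₀ a b : E} {γ : Path a b}
    (hγ : ∀ t, p (γ t) = p x₀) : ∀ t, p (γ.symm t) = p x₀ := fun _ => hγ _

theorem fiber_map {p : C(E, B)} {f : C(E, E)} (hf : ∀ x, p (f x) = p x) {x₀ a b : E}
    {γ : Path a b} (hγ : ∀ t, p (γ t) = p x₀) (k : ℕ) :
    ∀ t, p ((γ.map (f.continuous.iterate k)) t) = p x₀ := fun t => by
  show p ((⇑f)^[k] (γ t)) = p x₀
  rw [fiber_iterate hf k, hγ]

theorem fiber_nPath {p : C(E, B)} {f : C(E, E)} (hf : ∀ x, p (f x) = p x) {x₀ : E}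
    {ω : Path x₀ (f x₀)} (hω : ∀ t, p (ω t) = p x₀) :
    ∀ (n : ℕ) (t : I), p (nPath f ω n t) = p x₀
  | 0, _ => rfl
  | 1, t => hω t
  | (n + 2), t => by
      simp only [nPath]
      exact fiber_trans (fiber_nPath hf hω (n + 1)) (fiber_map hf hω (n + 1)) t

/-- The loop `f^{kω}(θ) = k(ω) ∗ f^k(θ) ∗ k(ω)⁻¹` at `x₀`. -/
noncomputable def fpowLoop (f : C(E, E)) {x₀ : E} (ω : Path x₀ (f x₀)) (k : ℕ) (θ : Path x₀ x₀) :
    Path x₀ x₀ :=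
  ((nPath f ω k).trans (θ.map (f.continuous.iterate k))).trans (nPath f ω k).symm

/-- `f^{kω}` applied to a fiber loop is again a fiber loop. -/
noncomputable def fpowFiberLoop (p : C(E, B)) (f : C(E, E)) (hf : ∀ x, p (f x) = p x) {x₀ : E}
    (ω : Path x₀ (f x₀)) (hω : ∀ t, p (ω t) = p x₀) (k : ℕ) (θ : FiberLoop p x₀) :
    FiberLoop p x₀ :=
  ⟨fpowLoop f ω k θ.1,
    fiber_trans (fiber_trans (fiber_nPath hf hω k) (fiber_map hf θ.2 k))
      (fiber_symm (fiber_nPath hf hω k))⟩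

/-- Auxiliary product `f^{0·mω}(θ) ∗ f^{1·mω}(θ) ∗ ⋯ ∗ f^{(j−1)·mω}(θ)`. -/
noncomputable def gammaAux (f : C(E, E)) {x₀ : E} (ω : Path x₀ (f x₀)) (m : ℕ) (θ : Path x₀ x₀) :
    ℕ → Path x₀ x₀
  | 0 => Path.refl x₀
  | (j + 1) => (gammaAux f ω m θ j).trans (fpowLoop f ω (j * m) θ)

/-- The loop `γ_{m,n}(θ) = θ ∗ f^{mω}(θ) ∗ f^{2mω}(θ) ∗ ⋯ ∗ f^{(n−m)ω}(θ)`. -/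
noncomputable def gammaLoop (f : C(E, E)) {x₀ : E} (ω : Path x₀ (f x₀)) (m n : ℕ) (θ : Path x₀ x₀) :
    Path x₀ x₀ :=
  gammaAux f ω m θ (n / m)

theorem fiber_gammaAux {p : C(E, B)} {f : C(E, E)} (hf : ∀ x, p (f x) = p x) {x₀ : E}
    {ω : Path x₀ (f x₀)} (hω : ∀ t, p (ω t) = p x₀) (m : ℕ) (θ : FiberLoop p x₀) :
    ∀ (j : ℕ) (t : I), p (gammaAux f ω m θ.1 j t) = p x₀
  | 0, _ => rfl
  | (j + 1), t => by
    simp only [gammaAux]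
    exact fiber_trans (fiber_gammaAux hf hω m θ j)
      (fpowFiberLoop p f hf ω hω (j * m) θ).2 t

/-- `γ_{m,n}` applied to a fiber loop is again a fiber loop. -/
noncomputable def gammaFiberLoop (p : C(E, B)) (f : C(E, E)) (hf : ∀ x, p (f x) = p x) {x₀ : E}
    (ω : Path x₀ (f x₀)) (hω : ∀ t, p (ω t) = p x₀) (m n : ℕ) (θ : FiberLoop p x₀) :
    FiberLoop p x₀ :=
  ⟨gammaLoop f ω m n θ.1, fiber_gammaAux hf hω m θ (n / m)⟩

/-- `F` realizes the induced function `[f^ω]` on the Reidemeister classes of `f^n` over `B`. -/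
def IsFOmegaMap (p : C(E, B)) (f : C(E, E)) (hf : ∀ x, p (f x) = p x) {x₀ : E}
    (ω : Path x₀ (f x₀)) (hω : ∀ t, p (ω t) = p x₀) (n : ℕ)
    (F : ReidemeisterSetB p (iterC f n) (nPath f ω n) →
      ReidemeisterSetB p (iterC f n) (nPath f ω n)) : Prop :=
  ∀ θ : FiberLoop p x₀,
    F (Quot.mk _ θ) = Quot.mk _ (fpowFiberLoop p f hf ω hω 1 θ)

/-- `G` realizes the induced function `[γ_{m,n}]` from the Reidemeister classes of `f^m`
to those of `f^n` over `B`. -/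
def IsGammaMap (p : C(E, B)) (f : C(E, E)) (hf : ∀ x, p (f x) = p x) {x₀ : E}
    (ω : Path x₀ (f x₀)) (hω : ∀ t, p (ω t) = p x₀) (m n : ℕ)
    (G : ReidemeisterSetB p (iterC f m) (nPath f ω m) →
      ReidemeisterSetB p (iterC f n) (nPath f ω n)) : Prop :=
  ∀ θ : FiberLoop p x₀,
    G (Quot.mk _ θ) = Quot.mk _ (gammaFiberLoop p f hf ω hω m n θ)

/-- Fixed points of a continuous self-map. -/
def FixPt (g : C(E, E)) : Type := {x : E // g x = x}

/-- Nielsen equivalence over `B` of fixed points of `g`. -/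
def NielsenRelB (p : C(E, B)) (g : C(E, E)) : FixPt g → FixPt g → Prop := fun x y =>
  ∃ (lam : Path x.1 y.1) (H : C(I × I, E)),
    (∀ t, H (t, 0) = lam t) ∧
    (∀ t, H (t, 1) = g (lam t)) ∧
    (∀ s, H (0, s) = x.1) ∧
    (∀ s, H (1, s) = y.1) ∧
    (∀ t s, p (H (t, s)) = p (lam t))

/-- The set of Nielsen classes over `B`. -/
def NielsenSetB (p : C(E, B)) (g : C(E, E)) : Type := Quot (NielsenRelB p g)

/-- The space `E_B(g) = {(x, α) : p∘α const, α(0) = x, α(1) = g(x)}` with the topology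
induced from `E × C(I, E)` (compact-open topology on paths). -/
def EBSpace (p : C(E, B)) (g : C(E, E)) : Type :=
  {z : E × C(I, E) // (∀ t, p (z.2 t) = p z.1) ∧ z.2 0 = z.1 ∧ z.2 1 = g z.1}

instance (p : C(E, B)) (g : C(E, E)) : TopologicalSpace (EBSpace p g) :=
  instTopologicalSpaceSubtype

/-- Path components of a space. -/
def Pi0 (X : Type) [TopologicalSpace X] : Type := Quot (@Joined X _)

/-- The map `g_B : Fix(g) → E_B(g)`, `x ↦ (x, constant path at x)`. -/
def gBMap (p : C(E, B)) (g : C(E, E)) (x : FixPt g) : EBSpace p g :=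
  ⟨(x.1, ContinuousMap.const I x.1), fun _ => rfl, rfl, x.2.symm⟩

instance (g : C(E, E)) : TopologicalSpace (FixPt g) := instTopologicalSpaceSubtype

/-- The Reidemeister class over `B` of a fiber loop. -/
def rClass (p : C(E, B)) (g : C(E, E)) {x₀ : E} (w : Path x₀ (g x₀)) (θ : FiberLoop p x₀) :
    ReidemeisterSetB p g w := Quot.mk _ θ

/-- The Nielsen class over `B` of a fixed point. -/
def nClass (p : C(E, B)) {g : C(E, E)} (x : FixPt g) : NielsenSetB p g := Quot.mk _ x

/-- The path component of a point. -/
def piComp {X : Type} [TopologicalSpace X] (x : X) : Pi0 X := Quot.mk _ x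

/-- A Reidemeister class of `f^n` over `B` is reducible to `m` if it lies in the image of
the induced function `[γ_{m,n}]`. -/
def ReducibleTo (p : C(E, B)) (f : C(E, E)) (hf : ∀ x, p (f x) = p x) {x₀ : E}
    (ω : Path x₀ (f x₀)) (hω : ∀ t, p (ω t) = p x₀) (n m : ℕ)
    (a : ReidemeisterSetB p (iterC f n) (nPath f ω n)) : Prop :=
  ∃ G : ReidemeisterSetB p (iterC f m) (nPath f ω m) →
      ReidemeisterSetB p (iterC f n) (nPath f ω n),
    IsGammaMap p f hf ω hω m n G ∧ a ∈ Set.range G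

/-!
A Hurewicz fibration has a lifting function `Λ`, and every lift of a path `w` is homotopic,
through lifts of `w` with the same initial point, to the `Λ`-lift of `w`. Stacking such homotopies
gives, for every path `u` from `x` to `y` and every path `L` in the fiber from `x` to `f x`, a
square over `p ∘ u` with bottom `u`, top `f ∘ u` and left edge `L` (after reparametrisation).
These squares can be reversed and composed side by side, and a homotopy inside a fiber is such a
square over a constant path. So "`θ ∗ ω₀` and `γ ∗ ω₁` are the vertical edges of a square" is a
relation that is total in both directions and compatible with the Reidemeister relations at both
ends; it descends to the bijection `κ`, which is independent of `u` since the relation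
quantifies over all paths.
-/

theorem ContinuousMap.Homotopy.trans_apply_rel {X Y Z : Type*} [TopologicalSpace X]
    [TopologicalSpace Y] [TopologicalSpace Z] {f₀ f₁ f₂ : C(X, Y)} {F : f₀.Homotopy f₁}
    {G : f₁.Homotopy f₂}
    {a b c : Z} {γ : Path a b} {δ : Path b c} (R : Z → Y → Prop) {x : X}
    (hF : ∀ t, R (γ t) (F (t, x))) (hG : ∀ t, R (δ t) (G (t, x))) (t : I) :
    R ((γ.trans δ) t) ((F.trans G) (t, x)) := by
  rw [Path.trans_apply, ContinuousMap.Homotopy.trans_apply]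
  split_ifs
  exacts [hF _, hG _]

theorem ContinuousMap.Homotopy.trans_apply_of_forall {X Y : Type*} [TopologicalSpace X]
    [TopologicalSpace Y] {f₀ f₁ f₂ : C(X, Y)} {F : f₀.Homotopy f₁} {G : f₁.Homotopy f₂}
    (P : X → Y → Prop) (hF : ∀ t x, P x (F (t, x))) (hG : ∀ t x, P x (G (t, x)))
    (t : I) (x : X) : P x ((F.trans G) (t, x)) := by
  rw [ContinuousMap.Homotopy.trans_apply]
  split_ifs
  exacts [hF _ x, hG _ x]

def Path.codRestrict {X : Type*} [TopologicalSpace X] {P : X → Prop} {x y : X} (γ : Path x y)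
    (h : ∀ t, P (γ t)) : Path (⟨x, γ.source ▸ h 0⟩ : Subtype P) ⟨y, γ.target ▸ h 1⟩ where
  toFun t := ⟨γ t, h t⟩
  continuous_toFun := γ.continuous.subtype_mk h
  source' := Subtype.ext γ.source
  target' := Subtype.ext γ.target

theorem unitInterval.min_add_projIcc_sub (r t : I) :
    ((min r t : I) : ℝ) + (Set.projIcc 0 1 zero_le_one ((t : ℝ) - r) : ℝ) = t := by
  have := t.2.2; have := r.2.1
  rw [Set.coe_projIcc]
  push_cast
  rcases min_cases (r : ℝ) t with h | h <;>
    rcases max_cases (0 : ℝ) (min 1 (t - r)) with h' | h' <;>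
    rcases min_cases (1 : ℝ) (t - r) with h'' | h'' <;> linarith

theorem Quot.exists_bijective_of_rel {α β : Sort*} {r : α → α → Prop} {s : β → β → Prop}
    (hr : ∀ a, r a a) (hs : ∀ b, s b b) (T : α → β → Prop) (hT : ∀ a, ∃ b, T a b)
    (hT' : ∀ b, ∃ a, T a b) (hrs : ∀ a a' b b', T a b → T a' b' → (r a a' ↔ s b b')) :
    ∃ κ : Quot r → Quot s, Function.Bijective κ ∧
      ∀ a b, T a b → κ (Quot.mk r a) = Quot.mk s b := by
  choose g hg using hT
  choose g' hg' using hT'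
  refine ⟨Quot.lift (fun a => Quot.mk s (g a))
    (fun a a' h => Quot.sound ((hrs a a' _ _ (hg a) (hg a')).1 h)), ?_, ?_⟩
  · refine Function.bijective_iff_has_inverse.2 ⟨Quot.lift (fun b => Quot.mk r (g' b))
      (fun b b' h => Quot.sound ((hrs _ _ b b' (hg' b) (hg' b')).2 h)), ?_, ?_⟩
    · rintro ⟨a⟩
      exact Quot.sound ((hrs _ a _ _ (hg' (g a)) (hg a)).2 (hs _))
    · rintro ⟨b⟩
      exact Quot.sound ((hrs _ _ _ b (hg (g' b)) (hg' b)).1 (hr _))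
  · exact fun a b hab => Quot.sound ((hrs a a _ b (hg a) hab).1 (hr a))

/-- `ReidemeisterRelB p f w θ θ'` is, by definition, `LiftRelB p f (θ.1.trans w) (θ'.1.trans w)`.
-/
def LiftRelB (p : C(E, B)) (f : C(E, E)) {x y : E} (L : Path x (f x)) (R : Path y (f y)) :
    Prop :=
  ∃ (u : Path x y) (H : C(I × I, E)),
    (∀ t, H (t, 0) = u t) ∧
    (∀ s, H (0, s) = L s) ∧
    (∀ t, H (t, 1) = f (u t)) ∧
    (∀ s, H (1, s) = R s) ∧
    (∀ t s, p (H (t, s)) = p (u t))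

namespace LiftRelB

variable {p : C(E, B)} {f : C(E, E)} {x y z : E}

theorem refl {L : Path x (f x)} (hL : ∀ s, p (L s) = p x) : LiftRelB p f L L :=
  ⟨Path.refl x, ⟨fun z => L z.2, by fun_prop⟩, fun _ => L.source, fun _ => rfl,
    fun _ => L.target, fun _ => rfl, fun _ s => hL s⟩

theorem symm {L : Path x (f x)} {R : Path y (f y)} :
    LiftRelB p f L R → LiftRelB p f R L := by
  rintro ⟨u, H, hbot, hleft, htop, hright, hproj⟩
  refine ⟨u.symm, ⟨fun z => H (σ z.1, z.2), by fun_prop⟩, fun t => hbot _, fun s => ?_,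
    fun t => htop _, fun s => ?_, fun t s => hproj _ _⟩
  · simpa using hright s
  · simpa using hleft s

theorem trans {L : Path x (f x)} {M : Path y (f y)} {R : Path z (f z)} :
    LiftRelB p f L M → LiftRelB p f M R → LiftRelB p f L R := by
  rintro ⟨u, H, hbot, hleft, htop, hright, hproj⟩ ⟨u', H', hbot', hleft', htop', hright', hproj'⟩
  let F : ContinuousMap.Homotopy (L : C(I, E)) M := ⟨H, hleft, hright⟩
  let F' : ContinuousMap.Homotopy (M : C(I, E)) R := ⟨H', hleft', hright'⟩
  refine ⟨u.trans u', (F.trans F').toContinuousMap, ?_, (F.trans F').apply_zero, ?_,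
    (F.trans F').apply_one, fun t s => ?_⟩
  · exact ContinuousMap.Homotopy.trans_apply_rel (fun e e' => e' = e) hbot hbot'
  · exact ContinuousMap.Homotopy.trans_apply_rel (fun e e' => e' = f e) htop htop'
  · exact ContinuousMap.Homotopy.trans_apply_rel (fun e e' => p e' = p e) (hproj · s)
      (hproj' · s) t

theorem of_homotopic (hx : p (f x) = p x)
    {γ₀ γ₁ : Path (⟨x, rfl⟩ : {e // p e = p x}) ⟨f x, hx⟩} (h : γ₀.Homotopic γ₁) :
    LiftRelB p f (γ₀.map continuous_subtype_val) (γ₁.map continuous_subtype_val) := by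
  obtain ⟨F⟩ := h
  exact ⟨Path.refl x, ⟨fun z => F z, by fun_prop⟩, fun t => congrArg Subtype.val (F.source t),
    fun s => by simp, fun t => congrArg Subtype.val (F.target t), fun s => by simp,
    fun t s => (F (t, s)).2⟩

end LiftRelB

structure LiftingFunction (p : C(E, B)) where
  lift : C({z : E × C(I, B) // z.2 0 = p z.1} × I, E)
  lift_zero : ∀ z, lift (z, 0) = z.1.1
  proj_lift : ∀ z t, p (lift (z, t)) = z.1.2 t

theorem IsHurewiczFibration.nonempty_liftingFunction {p : C(E, B)}
    (hp : IsHurewiczFibration p) : Nonempty (LiftingFunction p) := by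
  obtain ⟨Λ, hΛ₀, hΛp⟩ := hp {z : E × C(I, B) // z.2 0 = p z.1}
    ⟨fun q => q.1.1.2 q.2, by fun_prop⟩ ⟨fun z => z.1.1, by fun_prop⟩ (fun z => z.2)
  exact ⟨⟨Λ, hΛ₀, fun z t => hΛp (z, t)⟩⟩

namespace LiftingFunction

variable {p : C(E, B)} (Λ : LiftingFunction p)

def liftPath (e : E) (w : C(I, B)) (h : w 0 = p e) : C(I, E) := Λ.lift.curry ⟨(e, w), h⟩

/-- At time `r` the homotopy follows `ℓ` up to `r` and then the `Λ`-lift of the rest of `w`. -/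
theorem exists_homotopy_liftPath {a b : E} (ℓ : Path a b) (w : C(I, B))
    (hℓ : ∀ t, p (ℓ t) = w t) :
    ∃ D : (Λ.liftPath a w (by rw [← hℓ 0, ℓ.source])).Homotopy ℓ,
      (∀ r, D (r, 0) = a) ∧ ∀ z, p (D z) = w z.2 := by
  let clamp : ℝ → I := Set.projIcc 0 1 zero_le_one
  have hclamp : ∀ t : I, clamp t = t := Set.projIcc_val zero_le_one
  let W : C(I, C(I, B)) := (w.comp ⟨fun z : I × I => clamp (z.1 + z.2), by fun_prop⟩).curry
  have hW : ∀ r, W r 0 = p (ℓ r) := fun r => by simp [W, hclamp, hℓ]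
  have hW₀ : W 0 = w := by ext t; simp [W, hclamp]
  let D : C(I × I, E) := ⟨fun z => Λ.lift (⟨(ℓ (min z.1 z.2), W (min z.1 z.2)), hW _⟩,
    clamp (z.2 - z.1)), by fun_prop⟩
  have hclamp₀ : ∀ x ≤ 0, clamp x = 0 := fun x hx => Set.projIcc_of_le_left _ hx
  refine ⟨⟨D, fun t => ?_, fun t => ?_⟩, fun r => ?_, fun z => ?_⟩
  · simp [D, liftPath, hclamp, hW₀]
  · have : clamp ((t : ℝ) - 1) = 0 := hclamp₀ _ (by linarith [t.2.2])
    simp [D, this, Λ.lift_zero, unitInterval.le_one']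
  · show D (r, 0) = a
    have : clamp (-(r : ℝ)) = 0 := hclamp₀ _ (by linarith [r.2.1])
    simp [D, this, Λ.lift_zero]
  · show p (D z) = w z.2
    simp only [D, ContinuousMap.coe_mk, Λ.proj_lift]
    simp only [W, ContinuousMap.curry_apply, ContinuousMap.comp_apply, ContinuousMap.coe_mk]
    rw [unitInterval.min_add_projIcc_sub, hclamp]

theorem exists_homotopy_liftPath_liftPath {a a' : E} (L : Path a a') (w : C(I, B))
    (hL : ∀ s, p (L s) = w 0) :
    ∃ M : (Λ.liftPath a w (by rw [← L.source, hL])).Homotopy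
        (Λ.liftPath a' w (by rw [← L.target, hL])),
      (∀ s, M (s, 0) = L s) ∧ ∀ z, p (M z) = w z.2 := by
  refine ⟨⟨⟨fun z => Λ.lift (⟨(L z.1, w), (hL z.1).symm⟩, z.2), by fun_prop⟩,
    fun t => ?_, fun t => ?_⟩, fun s => Λ.lift_zero _, fun z => Λ.proj_lift _ _⟩ <;>
    simp [liftPath]

end LiftingFunction

theorem IsHurewiczFibration.exists_liftRelB {p : C(E, B)} (hp : IsHurewiczFibration p)
    {f : C(E, E)} (hf : ∀ x, p (f x) = p x) {x y : E} (u : Path x y)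
    (L : Path x (f x)) (hL : ∀ s, p (L s) = p x) :
    ∃ R : Path y (f y), (∀ s, p (R s) = p y) ∧
      LiftRelB p f (((Path.refl x).trans L).trans (Path.refl (f x))) R := by
  obtain ⟨Λ⟩ := hp.nonempty_liftingFunction
  let w : C(I, B) := p.comp u
  obtain ⟨D₀, hD₀, hD₀p⟩ := Λ.exists_homotopy_liftPath u w fun _ => rfl
  obtain ⟨D₁, hD₁, hD₁p⟩ := Λ.exists_homotopy_liftPath (u.map f.continuous) w fun t => hf (u t)
  obtain ⟨M, hM, hMp⟩ := Λ.exists_homotopy_liftPath_liftPath L w fun s => by simp [w, hL s]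
  -- `G` deforms `u` into `f ∘ u` through lifts of `p ∘ u`; its transpose is the square.
  let G := (D₀.symm.trans M).trans D₁
  have hGp : ∀ s t, p (G (s, t)) = w t := fun s t =>
    ContinuousMap.Homotopy.trans_apply_of_forall (fun t e => p e = w t)
      (ContinuousMap.Homotopy.trans_apply_of_forall (F := D₀.symm) (fun t e => p e = w t)
        (fun r t => hD₀p _) (fun r t => hMp _)) (fun r t => hD₁p _) s t
  have hG₀ : ∀ s, G (s, 0) = (((Path.refl x).trans L).trans (Path.refl (f x))) s :=
    ContinuousMap.Homotopy.trans_apply_rel (fun a e => e = a)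
      (ContinuousMap.Homotopy.trans_apply_rel (F := D₀.symm) (G := M) (fun a e => e = a)
        (fun r => hD₀ (σ r)) hM) hD₁
  let R : Path y (f y) :=
    ⟨⟨fun s => G (s, 1), by fun_prop⟩, (G.apply_zero 1).trans u.target,
      (G.apply_one 1).trans (congrArg f u.target)⟩
  exact ⟨R, fun s => (hGp s 1).trans (congrArg p u.target), u,
    ⟨fun z => G (z.2, z.1), by fun_prop⟩, G.apply_zero, hG₀, G.apply_one, fun _ => rfl,
    fun t s => hGp s t⟩

theorem IsHurewiczFibration.exists_liftRelB_fiberLoop {p : C(E, B)} (hp : IsHurewiczFibration p)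
    {f : C(E, E)} (hf : ∀ x, p (f x) = p x) {x y : E} (u : Path x y)
    {ωx : Path x (f x)} (hωx : ∀ t, p (ωx t) = p x) {ωy : Path y (f y)}
    (hωy : ∀ t, p (ωy t) = p y) (θ : FiberLoop p x) :
    ∃ γ : FiberLoop p y, LiftRelB p f (θ.1.trans ωx) (γ.1.trans ωy) := by
  have hL := fiber_trans θ.2 hωx
  obtain ⟨R, hR, hLR⟩ := hp.exists_liftRelB hf u (θ.1.trans ωx) hL
  refine ⟨⟨R.trans ωy.symm, fiber_trans hR (fiber_symm hωy)⟩, ?_⟩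
  let L' := (θ.1.trans ωx).codRestrict (P := fun e => p e = p x) hL
  let R' := R.codRestrict (P := fun e => p e = p y) hR
  let ω' := ωy.codRestrict (P := fun e => p e = p y) hωy
  have hL' : LiftRelB p f (θ.1.trans ωx)
      (((Path.refl x).trans (θ.1.trans ωx)).trans (Path.refl (f x))) := by
    have := LiftRelB.of_homotopic (hf x) (γ₀ := L')
      (γ₁ := ((Path.refl _).trans L').trans (Path.refl _))
      ((Path.Homotopic.refl_trans L').symm.trans (Path.Homotopic.trans_refl _).symm)
    rwa [Path.map_trans, Path.map_trans] at this
  have hR' : LiftRelB p f R ((R.trans ωy.symm).trans ωy) := by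
    have := LiftRelB.of_homotopic (hf y) (γ₀ := R') (γ₁ := (R'.trans ω'.symm).trans ω')
      (((Path.Homotopic.trans_assoc _ _ _).trans (((Path.Homotopic.refl R').hcomp
        (Path.Homotopic.symm_trans ω')).trans (Path.Homotopic.trans_refl R'))).symm)
    rwa [Path.map_trans, Path.map_trans, ← Path.map_symm] at this
  exact hL'.trans (hLR.trans hR')

theorem reidemeister_basepoint_change_general {E B : Type} [TopologicalSpace E] [TopologicalSpace B]
    (p : C(E, B)) (hp : IsHurewiczFibration p)
    (f : C(E, E)) (hf : ∀ x, p (f x) = p x)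
    (x₀ x₁ : E) (u₀ : Path x₀ x₁)
    (ω₀ : Path x₀ (f x₀)) (hω₀ : ∀ t, p (ω₀ t) = p x₀)
    (ω₁ : Path x₁ (f x₁)) (hω₁ : ∀ t, p (ω₁ t) = p x₁) :
    ∃ κ : ReidemeisterSetB p f ω₀ → ReidemeisterSetB p f ω₁,
      Function.Bijective κ ∧
      ∀ (u : Path x₀ x₁) (θ : FiberLoop p x₀) (γ : FiberLoop p x₁) (H : C(I × I, E)),
        (∀ t, H (t, 0) = u t) →
        (∀ s, H (0, s) = (θ.1.trans ω₀) s) →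
        (∀ t, H (t, 1) = f (u t)) →
        (∀ s, H (1, s) = (γ.1.trans ω₁) s) →
        (∀ t s, p (H (t, s)) = p (u t)) →
        κ (rClass p f ω₀ θ) = rClass p f ω₁ γ := by
  obtain ⟨κ, hκ, hκT⟩ := Quot.exists_bijective_of_rel (r := ReidemeisterRelB p f ω₀)
    (s := ReidemeisterRelB p f ω₁) (fun θ => LiftRelB.refl (fiber_trans θ.2 hω₀))
    (fun γ => LiftRelB.refl (fiber_trans γ.2 hω₁))
    (fun (θ : FiberLoop p x₀) (γ : FiberLoop p x₁) => LiftRelB p f (θ.1.trans ω₀) (γ.1.trans ω₁))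
    (hp.exists_liftRelB_fiberLoop hf u₀ hω₀ hω₁)
    (fun γ => (hp.exists_liftRelB_fiberLoop hf u₀.symm hω₁ hω₀ γ).imp fun _ => LiftRelB.symm)
    (fun _ _ _ _ hθγ hθγ' => ⟨fun h => hθγ.symm.trans (LiftRelB.trans h hθγ'),
      fun h => hθγ.trans (LiftRelB.trans h hθγ'.symm)⟩)
  exact ⟨κ, hκ, fun u θ γ H h₁ h₂ h₃ h₄ h₅ => hκT θ γ ⟨u, H, h₁, h₂, h₃, h₄, h₅⟩⟩

theorem reidemeister_basepoint_change {E B : Type} [TopologicalSpace E] [TopologicalSpace B]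
    [CompactSpace E] [CompactSpace B] [PathConnectedSpace E] [PathConnectedSpace B]
    [T2Space E] [T2Space B] {dE dB : ℕ}
    [ChartedSpace (EuclideanSpace ℝ (Fin dE)) E]
    [ChartedSpace (EuclideanSpace ℝ (Fin dB)) B]
    (p : C(E, B)) (hp : IsHurewiczFibration p)
    (f : C(E, E)) (hf : ∀ x, p (f x) = p x)
    (x₀ x₁ : E) (u₀ : Path x₀ x₁)
    (ω₀ : Path x₀ (f x₀)) (hω₀ : ∀ t, p (ω₀ t) = p x₀)
    (ω₁ : Path x₁ (f x₁)) (hω₁ : ∀ t, p (ω₁ t) = p x₁) :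
    ∃ κ : ReidemeisterSetB p f ω₀ → ReidemeisterSetB p f ω₁,
      Function.Bijective κ ∧
      ∀ (u : Path x₀ x₁) (θ : FiberLoop p x₀) (γ : FiberLoop p x₁) (H : C(I × I, E)),
        (∀ t, H (t, 0) = u t) →
        (∀ s, H (0, s) = (θ.1.trans ω₀) s) →
        (∀ t, H (t, 1) = f (u t)) →
        (∀ s, H (1, s) = (γ.1.trans ω₁) s) →
        (∀ t s, p (H (t, s)) = p (u t)) →
        κ (rClass p f ω₀ θ) = rClass p f ω₁ γ :=
  reidemeister_basepoint_change_general p hp f hf x₀ x₁ u₀ ω₀ hω₀ ω₁ hω₁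
end

section
/- Let f: E → E be a fiber map over B, x₀ ∈ E, and ω a path from x₀ to f(x₀) lying in the fiber Y = p⁻¹(p(x₀)). Then the map Γ: R_B(f; x₀, ω) → π₀(E_B(f)) defined by sending the class of [θ] ∈ π₁(Y, x₀) to the path component of the point (x₀, θ∗ω) in E_B(f) is a well-defined bijection. -/
open unitInterval

variable {E B : Type} [TopologicalSpace E] [TopologicalSpace B]

/-!
A path in `E_B(f)` from `(x, α)` to `(x', α')` is the same thing as a path `c` from `x` to `x'`
together with a homotopy of fiber paths `α_t` from `c t` to `f (c t)`. Between the points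
`(x₀, θ ∗ ω)` this is literally the Reidemeister relation over `B`, so `Γ` is well defined and
injective. For surjectivity, join the base point of `(x, α)` to `x₀` by a path `c` and lift `c`
to `E_B(f)`; this lifting problem is relative to the ends of the fiber paths and is reduced to the
homotopy lifting property by collapsing the U-shaped path `c⁻¹ ∗ α ∗ (f ∘ c)` onto its top.
The lift ends at some `(x₀, β)`, which is joined to `(x₀, (β ∗ ω⁻¹) ∗ ω)` inside the fiber.
-/

section

local notation "projI" => Set.projIcc (0 : ℝ) 1 zero_le_one

variable {p : C(E, B)} {f : C(E, E)}

namespace FiberwiseLift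

/- On the path `c⁻¹ ∗ α ∗ (f ∘ c)` of `exists_uPath`, whose pieces are parametrized by the thirds
of `I`, the point at `u` lies over `c (height u)`; `levelPoint t ·` sweeps the sublevel set
`height ≤ t` from `(1 - t) / 3` to `(2 + t) / 3`. -/
noncomputable def height (u : ℝ) : ℝ := max (max (1 - 3 * u) (3 * u - 2)) 0

noncomputable def levelPoint (t s : ℝ) : ℝ := (1 - t) / 3 + s * (1 + 2 * t) / 3

@[fun_prop] theorem continuous_height : Continuous height := by
  unfold height; fun_prop

@[fun_prop] theorem continuous_levelPoint : Continuous fun w : ℝ × ℝ => levelPoint w.1 w.2 := by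
  unfold levelPoint; fun_prop

theorem height_nonneg (u : ℝ) : 0 ≤ height u := le_max_right _ _

theorem levelPoint_mem {t s : ℝ} (ht : t ∈ I) (hs : s ∈ I) : levelPoint t s ∈ I := by
  obtain ⟨ht₀, ht₁⟩ := ht
  obtain ⟨hs₀, hs₁⟩ := hs
  constructor <;> (unfold levelPoint; nlinarith)

theorem height_levelPoint_le {t s : ℝ} (ht : t ∈ I) (hs : s ∈ I) :
    height (levelPoint t s) ≤ t := by
  obtain ⟨ht₀, ht₁⟩ := ht
  obtain ⟨hs₀, hs₁⟩ := hs
  unfold height levelPoint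
  refine max_le (max_le ?_ ?_) ht₀ <;> nlinarith

theorem height_levelPoint_zero {t : ℝ} (ht : 0 ≤ t) : height (levelPoint t 0) = t := by
  unfold height levelPoint
  rw [max_eq_left (le_max_of_le_left (by linarith)), max_eq_left (by linarith)]; ring

theorem height_levelPoint_one {t : ℝ} (ht : 0 ≤ t) : height (levelPoint t 1) = t := by
  unfold height levelPoint
  rw [max_eq_left (le_max_of_le_right (by linarith)), max_eq_right (by linarith)]; ring

theorem height_zero_levelPoint {s : ℝ} (hs : s ∈ I) : height (levelPoint 0 s) = 0 :=
  le_antisymm (height_levelPoint_le unitInterval.zero_mem hs) (height_nonneg _)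

theorem coe_projI_of_mem {r : ℝ} (hr : r ∈ I) : ((projI r : I) : ℝ) = r := by
  rw [Set.projIcc_of_mem _ hr]

theorem projI_of_eq_coe {r : ℝ} {t : I} (h : r = t) : projI r = t := by
  rw [h, Set.projIcc_val]

theorem exists_uPath (hf : ∀ x, p (f x) = p x) (c α : C(I, E)) (hα₀ : α 0 = c 0)
    (hα₁ : α 1 = f (c 0)) (hα : ∀ s, p (α s) = p (c 0)) :
    ∃ γ : C(I, E), (∀ u : I, p (γ u) = p (c (projI (height u)))) ∧
      (∀ u t : I, (u : ℝ) = (1 - t) / 3 → γ u = c t) ∧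
      (∀ u s : I, (u : ℝ) = (1 + s) / 3 → γ u = α s) ∧
      (∀ u t : I, (u : ℝ) = (2 + t) / 3 → γ u = f (c t)) := by
  have hγ : Continuous fun u : I =>
      if (u : ℝ) ≤ 1 / 3 then c (projI (1 - 3 * u))
      else if (u : ℝ) ≤ 2 / 3 then α (projI (3 * u - 1)) else f (c (projI (3 * u - 2))) := by
    refine Continuous.if_le (by fun_prop) (Continuous.if_le (by fun_prop) (by fun_prop)
      (by fun_prop) (by fun_prop) fun u hu => ?_) (by fun_prop) (by fun_prop) fun u hu => ?_
    · norm_num [hu, hα₁]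
    · norm_num [hu, hα₀]
  refine ⟨⟨_, hγ⟩, fun u => ?_, fun u t hu => ?_, fun u s hu => ?_, fun u t hu => ?_⟩
  · have hu := u.2.1
    simp only [ContinuousMap.coe_mk]
    unfold height
    split_ifs with h₁ h₂
    · rw [max_eq_left (le_max_of_le_left (by linarith)), max_eq_left (by linarith)]
    · rw [hα, max_eq_right (max_le (by linarith) (by linarith)), Set.projIcc_left]; rfl
    · rw [hf, max_eq_left (le_max_of_le_right (by linarith)), max_eq_right (by linarith)]
  · obtain ⟨ht₀, ht₁⟩ := t.2
    simp only [ContinuousMap.coe_mk, hu]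
    rw [if_pos (by linarith)]
    exact congrArg c (projI_of_eq_coe (by ring))
  · obtain ⟨hs₀, hs₁⟩ := s.2
    simp only [ContinuousMap.coe_mk, hu]
    split_ifs with h₁ h₂
    · have hs : s = 0 := Subtype.ext (by push_cast; linarith)
      rw [hs, hα₀]; exact congrArg c (projI_of_eq_coe (by norm_num))
    · exact congrArg α (projI_of_eq_coe (by ring))
    · exact absurd h₂ (by linarith)
  · obtain ⟨ht₀, ht₁⟩ := t.2
    simp only [ContinuousMap.coe_mk, hu]
    split_ifs with h₁ h₂
    · exact absurd h₁ (by linarith)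
    · have ht : t = 0 := Subtype.ext (by push_cast; linarith)
      rw [ht, ← hα₁]; exact congrArg α (projI_of_eq_coe (by norm_num))
    · exact congrArg (f ∘ c) (projI_of_eq_coe (by ring))

/- Lift the homotopy `(u, σ) ↦ p (c (height u + σ))` starting from the U-shaped path. Along the
curve `σ = t - height u` the lift lies over `c t`, and the two ends of that curve are on the
bottom edge, where the lift is `c t` and `f (c t)`. -/
theorem _root_.IsHurewiczFibration.exists_fiberPath_homotopy (hp : IsHurewiczFibration p)
    (hf : ∀ x, p (f x) = p x) (c α : C(I, E)) (hα₀ : α 0 = c 0) (hα₁ : α 1 = f (c 0))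
    (hα : ∀ s, p (α s) = p (c 0)) :
    ∃ H : C(I × I, E), (∀ t, H (t, 0) = c t) ∧ (∀ s, H (0, s) = α s) ∧
      (∀ t, H (t, 1) = f (c t)) ∧ ∀ t s, p (H (t, s)) = p (c t) := by
  obtain ⟨γ, hγp, hγl, hγm, hγr⟩ := exists_uPath hf c α hα₀ hα₁ hα
  let Hb : C(I × I, B) := ⟨fun w => p (c (projI (height w.1 + w.2))), by fun_prop⟩
  obtain ⟨D, hD₀, hDp⟩ := hp I Hb γ fun u => by simp [Hb, hγp]
  have hcoe {t s : ℝ} (ht : t ∈ I) (hs : s ∈ I) :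
      ((projI (levelPoint t s) : I) : ℝ) = levelPoint t s :=
    coe_projI_of_mem (levelPoint_mem ht hs)
  refine ⟨⟨fun w => D (projI (levelPoint w.1 w.2), projI (w.1 - height (levelPoint w.1 w.2))),
    by fun_prop⟩, fun t => ?_, fun s => ?_, fun t => ?_, fun t s => ?_⟩
  · simp only [ContinuousMap.coe_mk, Set.Icc.coe_zero]
    rw [height_levelPoint_zero t.2.1, sub_self, Set.projIcc_left]
    refine (hD₀ _).trans (hγl _ _ ?_)
    rw [hcoe t.2 unitInterval.zero_mem, levelPoint]; ring
  · simp only [ContinuousMap.coe_mk, Set.Icc.coe_zero]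
    rw [height_zero_levelPoint s.2, sub_zero, Set.projIcc_left]
    refine (hD₀ _).trans (hγm _ _ ?_)
    rw [hcoe unitInterval.zero_mem s.2, levelPoint]; ring
  · simp only [ContinuousMap.coe_mk, Set.Icc.coe_one]
    rw [height_levelPoint_one t.2.1, sub_self, Set.projIcc_left]
    refine (hD₀ _).trans (hγr _ _ ?_)
    rw [hcoe t.2 unitInterval.one_mem, levelPoint]; ring
  · have hle := height_levelPoint_le t.2 s.2
    have hσ : (t : ℝ) - height (levelPoint t s) ∈ I :=
      ⟨sub_nonneg.2 hle, by linarith [t.2.2, height_nonneg (levelPoint t s)]⟩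
    refine (hDp _).trans ?_
    simp only [Hb, ContinuousMap.coe_mk]
    rw [hcoe t.2 s.2, coe_projI_of_mem hσ, add_sub_cancel, Set.projIcc_val]

end FiberwiseLift

theorem piComp_eq_piComp_iff {X : Type} [TopologicalSpace X] {x y : X} :
    piComp x = piComp y ↔ Joined x y :=
  Quot.eq.trans (Equivalence.eqvGen_iff (pathSetoid X).iseqv)

def Path.toFiber {x a b : E} (γ : Path a b) (hγ : ∀ s, p (γ s) = p x) :
    Path (⟨a, γ.source ▸ hγ 0⟩ : {e // p e = p x}) ⟨b, γ.target ▸ hγ 1⟩ :=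
  ⟨⟨fun s => ⟨γ s, hγ s⟩, by fun_prop⟩, Subtype.ext γ.source, Subtype.ext γ.target⟩

namespace EBSpace

def ofPath {x : E} (γ : Path x (f x)) (hγ : ∀ s, p (γ s) = p x) : EBSpace p f :=
  ⟨(x, γ.toContinuousMap), hγ, γ.source, γ.target⟩

theorem joined_iff {z z' : EBSpace p f} :
    Joined z z' ↔ ∃ (c : Path z.1.1 z'.1.1) (H : C(I × I, E)),
      (∀ t, H (t, 0) = c t) ∧ (∀ s, H (0, s) = z.1.2 s) ∧ (∀ t, H (t, 1) = f (c t)) ∧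
      (∀ s, H (1, s) = z'.1.2 s) ∧ ∀ t s, p (H (t, s)) = p (c t) := by
  constructor
  · rintro ⟨γ⟩
    refine ⟨γ.map (continuous_fst.comp continuous_subtype_val),
      ContinuousMap.uncurry ⟨fun t => (γ t).1.2, by fun_prop⟩, fun t => (γ t).2.2.1,
      fun s => by simp, fun t => (γ t).2.2.2, fun s => by simp, fun t s => (γ t).2.1 s⟩
  · rintro ⟨c, H, hH₀, hz, hH₁, hz', hHp⟩
    refine ⟨⟨⟨fun t => ⟨(c t, H.curry t), fun s => hHp t s, hH₀ t, hH₁ t⟩, by fun_prop⟩, ?_, ?_⟩⟩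
    · exact Subtype.ext (Prod.ext c.source (ContinuousMap.ext hz))
    · exact Subtype.ext (Prod.ext c.target (ContinuousMap.ext hz'))

theorem exists_joined_ofPath (hp : IsHurewiczFibration p) (hf : ∀ x, p (f x) = p x)
    (z : EBSpace p f) {y : E} (c : Path z.1.1 y) :
    ∃ (β : Path y (f y)) (hβ : ∀ s, p (β s) = p y), Joined z (ofPath β hβ) := by
  obtain ⟨H, hH₀, hz, hH₁, hHp⟩ := hp.exists_fiberPath_homotopy hf c.toContinuousMap z.1.2
    (z.2.2.1.trans c.source.symm) (by rw [z.2.2.2]; exact congrArg f c.source.symm)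
    (fun s => by rw [z.2.1 s]; exact congrArg p c.source.symm)
  refine ⟨⟨H.curry 1, (hH₀ 1).trans c.target, (hH₁ 1).trans (congrArg f c.target)⟩,
    fun s => (hHp 1 s).trans (congrArg p c.target),
    joined_iff.2 ⟨c, H, hH₀, hz, hH₁, fun s => rfl, hHp⟩⟩

theorem joined_ofPath_trans_symm_trans {x : E} {β ω : Path x (f x)} (hβ : ∀ s, p (β s) = p x)
    (hω : ∀ s, p (ω s) = p x) :
    Joined (ofPath ((β.trans ω.symm).trans ω) (fiber_trans (fiber_trans hβ (fiber_symm hω)) hω))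
      (ofPath β hβ) := by
  let βY := β.toFiber hβ
  let ωY := ω.toFiber hω
  obtain ⟨F⟩ : ((βY.trans ωY.symm).trans ωY).Homotopic βY :=
    ((Path.Homotopic.trans_assoc _ _ _).trans
      (Path.Homotopic.hcomp (.refl _) (Path.Homotopic.symm_trans _))).trans
      (Path.Homotopic.trans_refl _)
  refine joined_iff.2 ⟨Path.refl x, ⟨fun w => (F w).1, by fun_prop⟩, fun t => ?_, fun s => ?_,
    fun t => ?_, fun s => ?_, fun t s => (F (t, s)).2⟩
  · exact congrArg Subtype.val (F.source t)
  · change (F (0, s)).1 = ((β.trans ω.symm).trans ω) s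
    have hmap : ((βY.trans ωY.symm).trans ωY).map continuous_subtype_val =
        (β.trans ω.symm).trans ω := by
      simp only [Path.map_trans]; rfl
    rw [F.apply_zero, ← hmap]; rfl
  · exact congrArg Subtype.val (F.target t)
  · exact congrArg Subtype.val (F.apply_one s)

end EBSpace

variable {x₀ : E} {ω : Path x₀ (f x₀)}

noncomputable def FiberLoop.toEBSpace (hω : ∀ t, p (ω t) = p x₀) (θ : FiberLoop p x₀) :
    EBSpace p f :=
  EBSpace.ofPath (θ.1.trans ω) (fiber_trans θ.2 hω)

theorem reidemeisterRelB_iff_joined (hω : ∀ t, p (ω t) = p x₀) {θ θ' : FiberLoop p x₀} :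
    ReidemeisterRelB p f ω θ θ' ↔ Joined (θ.toEBSpace hω) (θ'.toEBSpace hω) :=
  (EBSpace.joined_iff (z := θ.toEBSpace hω) (z' := θ'.toEBSpace hω)).symm

theorem exists_joined_toEBSpace [PathConnectedSpace E] (hp : IsHurewiczFibration p)
    (hf : ∀ x, p (f x) = p x) (hω : ∀ t, p (ω t) = p x₀) (z : EBSpace p f) :
    ∃ θ : FiberLoop p x₀, Joined (θ.toEBSpace hω) z := by
  obtain ⟨β, hβ, hzβ⟩ := EBSpace.exists_joined_ofPath hp hf z (PathConnectedSpace.somePath _ x₀)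
  exact ⟨⟨β.trans ω.symm, fiber_trans hβ (fiber_symm hω)⟩,
    (EBSpace.joined_ofPath_trans_symm_trans hβ hω).trans hzβ.symm⟩

end

theorem reidemeister_equiv_pi0_general {E B : Type} [TopologicalSpace E] [TopologicalSpace B]
    [PathConnectedSpace E]
    (p : C(E, B)) (hp : IsHurewiczFibration p)
    (f : C(E, E)) (hf : ∀ x, p (f x) = p x)
    (x₀ : E) (ω : Path x₀ (f x₀)) (hω : ∀ t, p (ω t) = p x₀) :
    ∃ Γ : ReidemeisterSetB p f ω → Pi0 (EBSpace p f),
      Function.Bijective Γ ∧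
      ∀ (θ : FiberLoop p x₀) (z : EBSpace p f),
        z.1.1 = x₀ → (∀ s, z.1.2 s = (θ.1.trans ω) s) →
        Γ (rClass p f ω θ) = piComp z := by
  refine ⟨Quot.lift (fun θ => piComp (θ.toEBSpace hω)) fun _ _ h =>
    piComp_eq_piComp_iff.2 ((reidemeisterRelB_iff_joined hω).1 h), ⟨?_, ?_⟩, ?_⟩
  · rintro ⟨θ⟩ ⟨θ'⟩ h
    exact Quot.sound ((reidemeisterRelB_iff_joined hω).2 (piComp_eq_piComp_iff.1 h))
  · rintro ⟨z⟩
    obtain ⟨θ, hθ⟩ := exists_joined_toEBSpace hp hf hω z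
    exact ⟨Quot.mk _ θ, piComp_eq_piComp_iff.2 hθ⟩
  · rintro θ ⟨⟨x, α⟩, hz⟩ rfl hα
    exact congrArg piComp (Subtype.ext (Prod.ext rfl (ContinuousMap.ext fun s => (hα s).symm)))

theorem reidemeister_equiv_pi0 {E B : Type} [TopologicalSpace E] [TopologicalSpace B]
    [CompactSpace E] [CompactSpace B] [PathConnectedSpace E] [PathConnectedSpace B]
    [T2Space E] [T2Space B] {dE dB : ℕ}
    [ChartedSpace (EuclideanSpace ℝ (Fin dE)) E]
    [ChartedSpace (EuclideanSpace ℝ (Fin dB)) B]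
    (p : C(E, B)) (hp : IsHurewiczFibration p)
    (f : C(E, E)) (hf : ∀ x, p (f x) = p x)
    (x₀ : E) (ω : Path x₀ (f x₀)) (hω : ∀ t, p (ω t) = p x₀) :
    ∃ Γ : ReidemeisterSetB p f ω → Pi0 (EBSpace p f),
      Function.Bijective Γ ∧
      ∀ (θ : FiberLoop p x₀) (z : EBSpace p f),
        z.1.1 = x₀ → (∀ s, z.1.2 s = (θ.1.trans ω) s) →
        Γ (rClass p f ω θ) = piComp z :=
  reidemeister_equiv_pi0_general p hp f hf x₀ ω hω
end

section
/- For m | n the diagram commutes: [γ_{m,n}] ∘ [f^ω] = [f^ω] ∘ [γ_{m,n}] as maps R_B(f^m; x₀, m(ω)) → R_B(f^n; x₀, n(ω)). Consequently, if a class [α]_n ∈ R_B(f^n; x₀, n(ω)) is reducible to m, then every element of its [f^ω]-orbit is also reducible to m. -/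
open unitInterval

variable {E B : Type} [TopologicalSpace E] [TopologicalSpace B]

/-! The loop `f^{kω}(θ)` represents `[k(ω)] · f^k_*[θ] · [k(ω)]⁻¹` in the fundamental groupoid
of the fiber `Y`. Because `(k+1)(ω) = k(ω) ∗ f^k(ω)`, these twisted conjugations satisfy
`f^{(k+1)ω} = f^{kω} ∘ f^ω` on `π₁(Y, x₀)`, so `f^{kω} = (f^ω)^k` and every `f^{kω}` commutes
with `f^ω`. Since each `f^{kω}` is multiplicative, `γ_{m,n}(f^ω θ)` and `f^ω(γ_{m,n} θ)` are
homotopic in `Y`, and loops homotopic in `Y` are Reidemeister equivalent over `B` (with `c`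
constant). Finally `[γ_{m,n}]` semiconjugates `[f^ω]` to `[f^ω]`, so it also carries orbits
to orbits. -/

open CategoryTheory

namespace CategoryTheory.Groupoid

variable {C : Type*} [Groupoid C] {x : C}

def twistedConj (F : C ⥤ C) (a : x ⟶ F.obj x) (α : x ⟶ x) : x ⟶ x :=
  (a ≫ F.map α) ≫ Groupoid.inv a

variable (F : C ⥤ C) (a : x ⟶ F.obj x)

theorem twistedConj_id : twistedConj F a (𝟙 x) = 𝟙 x := by
  simp [twistedConj, Groupoid.inv_eq_inv]

theorem twistedConj_comp (α β : x ⟶ x) :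
    twistedConj F a (α ≫ β) = twistedConj F a α ≫ twistedConj F a β := by
  simp [twistedConj, Groupoid.inv_eq_inv]

theorem twistedConj_twistedConj (G : C ⥤ C) (b : x ⟶ G.obj x) (α : x ⟶ x) :
    twistedConj F a (twistedConj G b α) = twistedConj (G ⋙ F) (a ≫ F.map b) α := by
  simp [twistedConj, Groupoid.inv_eq_inv]

end CategoryTheory.Groupoid

namespace Path

variable {X : Type*} [TopologicalSpace X] {a b c : X}

def codRestrict_s9 (γ : Path a b) (P : X → Prop) (h : ∀ t, P (γ t)) :
    Path (⟨a, γ.source ▸ h 0⟩ : Subtype P) ⟨b, γ.target ▸ h 1⟩ where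
  toFun t := ⟨γ t, h t⟩
  continuous_toFun := γ.continuous.subtype_mk h
  source' := Subtype.ext γ.source
  target' := Subtype.ext γ.target

theorem codRestrict_trans (γ : Path a b) (δ : Path b c) (P : X → Prop) (hγ : ∀ t, P (γ t))
    (hδ : ∀ t, P (δ t)) (h : ∀ t, P ((γ.trans δ) t)) :
    (γ.trans δ).codRestrict_s9 P h = (γ.codRestrict_s9 P hγ).trans (δ.codRestrict_s9 P hδ) := by
  ext t
  simp only [codRestrict_s9, coe_mk_mk, Path.trans_apply]
  split_ifs <;> rfl

theorem codRestrict_symm (γ : Path a b) (P : X → Prop) (hγ : ∀ t, P (γ t))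
    (h : ∀ t, P (γ.symm t)) :
    γ.symm.codRestrict_s9 P h = (γ.codRestrict_s9 P hγ).symm :=
  rfl

end Path

namespace FiberLoop

variable {p : C(E, B)} {x₀ : E}

variable (p x₀) in
abbrev Fiber : Type := {x : E // p x = p x₀}

variable (p x₀) in
def basePt : FundamentalGroupoid (Fiber p x₀) := ⟨⟨x₀, rfl⟩⟩

noncomputable def loopClass (θ : FiberLoop p x₀) : basePt p x₀ ⟶ basePt p x₀ :=
  Path.Homotopic.Quotient.mk (θ.1.codRestrict_s9 (p · = p x₀) θ.2)

theorem reidemeisterRelB_of_loopClass_eq (g : C(E, E)) {w : Path x₀ (g x₀)}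
    (hw : ∀ t, p (w t) = p x₀) {θ θ' : FiberLoop p x₀} (h : loopClass θ = loopClass θ') :
    ReidemeisterRelB p g w θ θ' := by
  rcases θ with ⟨L, hL⟩
  rcases θ' with ⟨L', hL'⟩
  obtain ⟨K⟩ : Path.Homotopic ((L.trans w).codRestrict_s9 (p · = p x₀) (fiber_trans hL hw))
      ((L'.trans w).codRestrict_s9 (p · = p x₀) (fiber_trans hL' hw)) := by
    rw [Path.codRestrict_trans _ _ _ hL hw, Path.codRestrict_trans _ _ _ hL' hw]
    exact Path.Homotopic.Quotient.eq.mp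
      (congrArg (· ≫ Path.Homotopic.Quotient.mk (w.codRestrict_s9 (p · = p x₀) hw)) h)
  exact ⟨Path.refl x₀, ⟨fun z => (K z).1, continuous_subtype_val.comp K.continuous⟩,
    fun t => congrArg Subtype.val (K.source t), fun s => congrArg Subtype.val (K.apply_zero s),
    fun t => congrArg Subtype.val (K.target t), fun s => congrArg Subtype.val (K.apply_one s),
    fun t s => (K (t, s)).2⟩

variable {f : C(E, E)} (hf : ∀ x, p (f x) = p x)

def fiberIter (k : ℕ) : C(Fiber p x₀, Fiber p x₀) :=
  ⟨Subtype.map (⇑f)^[k] fun x hx => (fiber_iterate hf k x).trans hx,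
    (f.continuous.iterate k).subtype_map _⟩

theorem codRestrict_map_iterate {a b : E} (γ : Path a b) (hγ : ∀ t, p (γ t) = p x₀) (k : ℕ)
    (h : ∀ t, p ((γ.map (f.continuous.iterate k)) t) = p x₀) :
    (γ.map (f.continuous.iterate k)).codRestrict_s9 (p · = p x₀) h
      = (γ.codRestrict_s9 (p · = p x₀) hγ).map (fiberIter hf k).continuous :=
  rfl

variable {ω : Path x₀ (f x₀)} (hω : ∀ t, p (ω t) = p x₀)

noncomputable def nPathClass (k : ℕ) :
    basePt p x₀ ⟶ (FundamentalGroupoid.map (fiberIter hf k)).obj (basePt p x₀) :=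
  Path.Homotopic.Quotient.mk ((nPath f ω k).codRestrict_s9 (p · = p x₀) (fiber_nPath hf hω k))

noncomputable def fpow (k : ℕ) : (basePt p x₀ ⟶ basePt p x₀) → (basePt p x₀ ⟶ basePt p x₀) :=
  Groupoid.twistedConj (FundamentalGroupoid.map (fiberIter hf k)) (nPathClass hf hω k)

theorem loopClass_fpowFiberLoop (k : ℕ) (θ : FiberLoop p x₀) :
    loopClass (fpowFiberLoop p f hf ω hω k θ) = fpow hf hω k (loopClass θ) := by
  have hn := fiber_nPath hf hω k
  have hθ := fiber_map hf θ.2 k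
  refine congrArg Path.Homotopic.Quotient.mk
    ((Path.codRestrict_trans _ _ (p · = p x₀) (fiber_trans hn hθ) (fiber_symm hn) _).trans ?_)
  rw [Path.codRestrict_trans _ _ (p · = p x₀) hn hθ, Path.codRestrict_symm _ (p · = p x₀) hn,
    codRestrict_map_iterate hf _ θ.2]
  rfl

-- `f^[k + 1] = f^[k] ∘ f` holds definitionally, which makes both sides below well typed.
theorem nPathClass_succ (k : ℕ) :
    nPathClass hf hω (k + 1) = nPathClass hf hω k
      ≫ (FundamentalGroupoid.map (fiberIter hf k)).map (nPathClass hf hω 1) := by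
  cases k with
  | zero => exact (Category.id_comp _).symm
  | succ k =>
    exact congrArg Path.Homotopic.Quotient.mk (Path.codRestrict_trans _ _ (p · = p x₀)
      (fiber_nPath hf hω (k + 1)) (fiber_map hf hω (k + 1)) _)

theorem fpow_zero (α : basePt p x₀ ⟶ basePt p x₀) : fpow hf hω 0 α = α := by
  refine Quotient.inductionOn α fun γ => ?_
  show (𝟙 (basePt p x₀) ≫ (Path.Homotopic.Quotient.mk γ : basePt p x₀ ⟶ basePt p x₀))
    ≫ 𝟙 (basePt p x₀) = _
  rw [Category.id_comp, Category.comp_id]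
  rfl

theorem fpow_succ (k : ℕ) (α : basePt p x₀ ⟶ basePt p x₀) :
    fpow hf hω (k + 1) α = fpow hf hω k (fpow hf hω 1 α) := by
  rw [fpow, fpow, fpow, Groupoid.twistedConj_twistedConj, ← nPathClass_succ]
  unfold Groupoid.twistedConj
  congr 2
  induction α using Quotient.inductionOn
  rfl

theorem fpow_eq_iterate (k : ℕ) : fpow hf hω k = (fpow hf hω 1)^[k] := by
  induction k with
  | zero => exact funext (fpow_zero hf hω)
  | succ k ih => funext α; rw [fpow_succ, ih, Function.iterate_succ_apply]

theorem fpow_commute (k : ℕ) : Function.Commute (fpow hf hω k) (fpow hf hω 1) := by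
  rw [fpow_eq_iterate]
  exact Function.Commute.iterate_self _ k

theorem fpow_comp (k : ℕ) (α β : basePt p x₀ ⟶ basePt p x₀) :
    fpow hf hω k (α ≫ β) = fpow hf hω k α ≫ fpow hf hω k β :=
  Groupoid.twistedConj_comp _ _ α β

noncomputable def gammaProd (m : ℕ) (α : basePt p x₀ ⟶ basePt p x₀) :
    ℕ → (basePt p x₀ ⟶ basePt p x₀)
  | 0 => 𝟙 _
  | j + 1 => gammaProd m α j ≫ fpow hf hω (j * m) α

theorem loopClass_gammaAux (m : ℕ) (θ : FiberLoop p x₀) (j : ℕ) :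
    loopClass ⟨gammaAux f ω m θ.1 j, fiber_gammaAux hf hω m θ j⟩
      = gammaProd hf hω m (loopClass θ) j := by
  induction j with
  | zero => rfl
  | succ j ih =>
    rw [gammaProd, ← ih, ← loopClass_fpowFiberLoop]
    exact congrArg Path.Homotopic.Quotient.mk (Path.codRestrict_trans _ _ (p · = p x₀) _ _ _)

theorem loopClass_gammaFiberLoop (m n : ℕ) (θ : FiberLoop p x₀) :
    loopClass (gammaFiberLoop p f hf ω hω m n θ) = gammaProd hf hω m (loopClass θ) (n / m) :=
  loopClass_gammaAux hf hω m θ (n / m)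

theorem gammaProd_fpow_one (m : ℕ) (α : basePt p x₀ ⟶ basePt p x₀) (j : ℕ) :
    gammaProd hf hω m (fpow hf hω 1 α) j = fpow hf hω 1 (gammaProd hf hω m α j) := by
  induction j with
  | zero => exact (Groupoid.twistedConj_id _ _).symm
  | succ j ih => rw [gammaProd, gammaProd, ih, fpow_comp, fpow_commute]

theorem loopClass_gammaFiberLoop_fpowFiberLoop (m n : ℕ) (θ : FiberLoop p x₀) :
    loopClass (gammaFiberLoop p f hf ω hω m n (fpowFiberLoop p f hf ω hω 1 θ))
      = loopClass (fpowFiberLoop p f hf ω hω 1 (gammaFiberLoop p f hf ω hω m n θ)) := by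
  rw [loopClass_gammaFiberLoop, loopClass_fpowFiberLoop, loopClass_fpowFiberLoop,
    loopClass_gammaFiberLoop, gammaProd_fpow_one]

end FiberLoop

theorem gamma_commutes_with_fOmega_general {E B : Type} [TopologicalSpace E] [TopologicalSpace B]
    (p : C(E, B))
    (f : C(E, E)) (hf : ∀ x, p (f x) = p x)
    (x₀ : E) (ω : Path x₀ (f x₀)) (hω : ∀ t, p (ω t) = p x₀)
    (m n : ℕ) :
    ∀ (G : ReidemeisterSetB p (iterC f m) (nPath f ω m) →
        ReidemeisterSetB p (iterC f n) (nPath f ω n))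
      (Fm : ReidemeisterSetB p (iterC f m) (nPath f ω m) →
        ReidemeisterSetB p (iterC f m) (nPath f ω m))
      (Fn : ReidemeisterSetB p (iterC f n) (nPath f ω n) →
        ReidemeisterSetB p (iterC f n) (nPath f ω n)),
      IsGammaMap p f hf ω hω m n G → IsFOmegaMap p f hf ω hω m Fm →
      IsFOmegaMap p f hf ω hω n Fn →
      G ∘ Fm = Fn ∘ G ∧
      ∀ a : ReidemeisterSetB p (iterC f n) (nPath f ω n),
        a ∈ Set.range G → ∀ r : ℕ, Fn^[r] a ∈ Set.range G := by
  intro G Fm Fn hG hFm hFn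
  have hcomm : Function.Semiconj G Fm Fn := by
    refine Quot.ind fun θ => ?_
    rw [hFm, hG, hG, hFn]
    exact Quot.sound (FiberLoop.reidemeisterRelB_of_loopClass_eq _ (fiber_nPath hf hω n)
      (FiberLoop.loopClass_gammaFiberLoop_fpowFiberLoop hf hω m n θ))
  refine ⟨funext hcomm, ?_⟩
  rintro _ ⟨b, rfl⟩ r
  exact ⟨Fm^[r] b, hcomm.iterate_right r b⟩

theorem gamma_commutes_with_fOmega {E B : Type} [TopologicalSpace E] [TopologicalSpace B]
    [CompactSpace E] [CompactSpace B] [PathConnectedSpace E] [PathConnectedSpace B]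
    [T2Space E] [T2Space B] {dE dB : ℕ}
    [ChartedSpace (EuclideanSpace ℝ (Fin dE)) E]
    [ChartedSpace (EuclideanSpace ℝ (Fin dB)) B]
    (p : C(E, B)) (hp : IsHurewiczFibration p)
    (f : C(E, E)) (hf : ∀ x, p (f x) = p x)
    (x₀ : E) (ω : Path x₀ (f x₀)) (hω : ∀ t, p (ω t) = p x₀)
    (m n : ℕ) (hm : 0 < m) (hmn : m ∣ n) :
    ∀ (G : ReidemeisterSetB p (iterC f m) (nPath f ω m) →
        ReidemeisterSetB p (iterC f n) (nPath f ω n))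
      (Fm : ReidemeisterSetB p (iterC f m) (nPath f ω m) →
        ReidemeisterSetB p (iterC f m) (nPath f ω m))
      (Fn : ReidemeisterSetB p (iterC f n) (nPath f ω n) →
        ReidemeisterSetB p (iterC f n) (nPath f ω n)),
      IsGammaMap p f hf ω hω m n G → IsFOmegaMap p f hf ω hω m Fm →
      IsFOmegaMap p f hf ω hω n Fn →
      G ∘ Fm = Fn ∘ G ∧
      ∀ a : ReidemeisterSetB p (iterC f n) (nPath f ω n),
        a ∈ Set.range G → ∀ r : ℕ, Fn^[r] a ∈ Set.range G :=
  gamma_commutes_with_fOmega_general p f hf x₀ ω hω m n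
end
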